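/- For θ ∈ [0, 2π), η̃ ∈ [0,1] and G ≥ 0 with η̃G < 1, define X(θ) = (1 - η̃G·cos θ)·cos θ + G and Y(θ) = (1 - η̃G·cos θ)·sin θ. Then for every θ, the point (X(θ), Y(θ)) satisfies √((X - G)² + Y²) = X² + Y² - (2-η̃)·G·X + (1-η̃)·G². -/
import Mathlib

/-- the parametrized indicatrix satisfies the implicit equation
√((X-G)²+Y²) = X² + Y² - (2-η̃)GX + (1-η̃)G². -/
theorem stmt_12 (η G : ℝ) (hη : η ∈ Set.Icc (0:ℝ) 1) (hG : 0 ≤ G) (h : η * G < 1)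
    (θ : ℝ) (hθ : θ ∈ Set.Ico 0 (2 * Real.pi)) :
    Real.sqrt (((1 - η*G*Real.cos θ) * Real.cos θ + G - G)^2
        + ((1 - η*G*Real.cos θ) * Real.sin θ)^2)
      = ((1 - η*G*Real.cos θ) * Real.cos θ + G)^2
        + ((1 - η*G*Real.cos θ) * Real.sin θ)^2
        - (2-η) * G * ((1 - η*G*Real.cos θ) * Real.cos θ + G)
        + (1-η) * G^2 := by
  obtain ⟨hη0, hη1⟩ := hη
  have hηG : 0 ≤ η * G := mul_nonneg hη0 hG
  have hc : η * G * Real.cos θ < 1 :=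
    lt_of_le_of_lt (by nlinarith [Real.cos_le_one θ, Real.neg_one_le_cos θ]) (by linarith [h] : η * G * 1 < 1)
  have hr : 0 ≤ 1 - η * G * Real.cos θ := by linarith
  have hpyth := Real.sin_sq_add_cos_sq θ
  have harg : ((1 - η*G*Real.cos θ) * Real.cos θ + G - G)^2
      + ((1 - η*G*Real.cos θ) * Real.sin θ)^2 = (1 - η*G*Real.cos θ)^2 := by
    linear_combination ((1 - η*G*Real.cos θ)^2) * hpyth
  rw [harg, Real.sqrt_sq hr]
  linear_combination (-(1 - η*G*Real.cos θ)^2) * hpyth
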